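/- Let C be a polygonal curve with vertices p_0, …, p_m. Then the iterated arclength respacings converge: for each k ∈ {0, …, m} the limit p*_k = lim_{n→∞} f^n(p_k) exists in ℝ^d, and the limiting polygonal curve C* with vertices p*_0, …, p*_m is equilateral, i.e. ‖p*_k − p*_{k−1}‖ has the same value for all k = 1, …, m. -/
import Mathlib


open Finset Filter

noncomputable section

/-- The length of the polygonal curve with vertices `p 0, …, p m`
(also the arclength distance from `p 0` to `p m` along the curve). -/
def polyLength {dim : ℕ} (p : ℕ → EuclideanSpace ℝ (Fin dim)) (m : ℕ) : ℝ :=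
  ∑ i ∈ Finset.range m, ‖p (i + 1) - p i‖

/-- `P` is the arclength-parameterized linear interpolation of the polygonal
curve with vertices `p 0, …, p m`:
`P ((1-t)·d_{k-1} + t·d_k) = (1-t)·p_{k-1} + t·p_k` for `t ∈ [0,1]`, `k = 1, …, m`,
where `d_k = polyLength p k` is the arclength up to vertex `k`. -/
def IsArcParam {dim : ℕ} (p : ℕ → EuclideanSpace ℝ (Fin dim)) (m : ℕ)
    (P : ℝ → EuclideanSpace ℝ (Fin dim)) : Prop :=
  ∀ k : ℕ, 1 ≤ k → k ≤ m → ∀ t : ℝ, 0 ≤ t → t ≤ 1 →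
    P ((1 - t) * polyLength p (k - 1) + t * polyLength p k)
      = (1 - t) • p (k - 1) + t • p k

/-- The polygonal curve with vertices `p 0, …, p m` is equilateral:
all consecutive interpoint distances agree. -/
def IsEquilateral {dim : ℕ} (p : ℕ → EuclideanSpace ℝ (Fin dim)) (m : ℕ) : Prop :=
  ∀ k l : ℕ, 1 ≤ k → k ≤ m → 1 ≤ l → l ≤ m →
    ‖p k - p (k - 1)‖ = ‖p l - p (l - 1)‖

/-- `q 0, …, q m` are the vertices of the arclength respacing `f(C)` of the
polygonal curve `C` with vertices `p 0, …, p m`: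
`q k = P (k·L(C)/m)` where `P` is the arclength parameterization of `C`;
by convention `f(C) := C` when `L(C) = 0`. -/
def Respaces {dim : ℕ} (m : ℕ) (p q : ℕ → EuclideanSpace ℝ (Fin dim)) : Prop :=
  (polyLength p m = 0 ∧ ∀ k ≤ m, q k = p k) ∨
  (0 < polyLength p m ∧ ∃ P : ℝ → EuclideanSpace ℝ (Fin dim), IsArcParam p m P ∧
    ∀ k ≤ m, q k = P ((k : ℝ) * polyLength p m / m))

variable {dim : ℕ}

lemma polyLength_nonneg (p : ℕ → EuclideanSpace ℝ (Fin dim)) (m : ℕ) :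
    0 ≤ polyLength p m :=
  Finset.sum_nonneg fun _ _ => norm_nonneg _

lemma polyLength_succ (p : ℕ → EuclideanSpace ℝ (Fin dim)) (k : ℕ) :
    polyLength p (k + 1) = polyLength p k + ‖p (k + 1) - p k‖ :=
  Finset.sum_range_succ _ _

lemma polyLength_mono (p : ℕ → EuclideanSpace ℝ (Fin dim)) : Monotone (polyLength p) :=
  fun _ _ h => Finset.sum_le_sum_of_subset_of_nonneg (Finset.range_subset_range.2 h)
    (fun _ _ _ => norm_nonneg _)

lemma edge_eq_zero {p : ℕ → EuclideanSpace ℝ (Fin dim)} {m : ℕ}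
    (h : polyLength p m = 0) {i : ℕ} (hi : i < m) : ‖p (i + 1) - p i‖ = 0 :=
  (Finset.sum_eq_zero_iff_of_nonneg (fun _ _ => norm_nonneg _)).1 h i (Finset.mem_range.2 hi)

lemma arcparam_vertex {p : ℕ → EuclideanSpace ℝ (Fin dim)} {P : ℝ → EuclideanSpace ℝ (Fin dim)}
    {m : ℕ} (hm : 1 ≤ m) (hP : IsArcParam p m P) :
    ∀ k ≤ m, P (polyLength p k) = p k := by
  intro k hk
  match k with
  | 0 =>
    have := hP 1 le_rfl hm 0 le_rfl zero_le_one
    simpa using this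
  | k + 1 =>
    have := hP (k + 1) (Nat.succ_le_succ (Nat.zero_le _)) hk 1 zero_le_one le_rfl
    simpa using this

lemma arcparam_lip {p : ℕ → EuclideanSpace ℝ (Fin dim)} {P : ℝ → EuclideanSpace ℝ (Fin dim)}
    {m : ℕ} (hP : IsArcParam p m P) :
    ∀ j ≤ m, ∀ s u : ℝ, 0 ≤ s → s ≤ u → u ≤ polyLength p j → ‖P u - P s‖ ≤ u - s := by
  intro j
  induction j with
  | zero =>
    intro _ s u hs hsu hu
    have h0 : polyLength p 0 = 0 := by simp [polyLength]
    have hsu' : s = u := le_antisymm hsu (by rw [h0] at hu; linarith)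
    simp [hsu']
  | succ j ih =>
    intro hjm s u hs hsu hu
    have hjm' : j ≤ m := Nat.le_of_succ_le hjm
    have hab : polyLength p j ≤ polyLength p (j + 1) := polyLength_mono p (Nat.le_succ j)
    have hseg : ∀ s u : ℝ, polyLength p j ≤ s → s ≤ u → u ≤ polyLength p (j + 1) →
        ‖P u - P s‖ ≤ u - s := by
      intro s u hs hsu hu
      set a := polyLength p j with ha
      set b := polyLength p (j + 1) with hb
      rcases eq_or_lt_of_le hab with h | h
      · have hsu' : s = u := le_antisymm hsu (by rw [← h] at hu; linarith)
        simp [hsu']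
      · set e := b - a with he
        have he0 : 0 < e := by simp only [he]; linarith
        have henorm : ‖p (j + 1) - p j‖ = e := by
          have := polyLength_succ p j
          simp only [he, ← ha, ← hb] at *
          linarith
        have key : ∀ x : ℝ, a ≤ x → x ≤ b →
            P x = (1 - (x - a) / e) • p j + ((x - a) / e) • p (j + 1) := by
          intro x hx1 hx2
          have ht1 : (x - a) / e ≤ 1 := by rw [div_le_one he0]; simp only [he]; linarith
          have ht0 : 0 ≤ (x - a) / e := div_nonneg (by linarith) he0.le
          have := hP (j + 1) (Nat.succ_le_succ (Nat.zero_le _)) hjm ((x - a) / e) ht0 ht1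
          simp only [Nat.add_sub_cancel, ← ha, ← hb] at this
          have harg : (1 - (x - a) / e) * a + (x - a) / e * b = x := by
            field_simp
            ring
          rwa [harg] at this
        rw [key s hs (hsu.trans hu), key u (hs.trans hsu) hu]
        have hdiff : ((1 - (u - a) / e) • p j + ((u - a) / e) • p (j + 1)) -
            ((1 - (s - a) / e) • p j + ((s - a) / e) • p (j + 1))
            = (((u - a) / e) - ((s - a) / e)) • (p (j + 1) - p j) := by
          module
        rw [hdiff, norm_smul, henorm]
        have : ((u - a) / e) - ((s - a) / e) = (u - s) / e := by ring
        rw [this, Real.norm_eq_abs, abs_of_nonneg (div_nonneg (by linarith) he0.le)]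
        rw [div_mul_cancel₀ _ (ne_of_gt he0)]
    by_cases hua : u ≤ polyLength p j
    · exact ih hjm' s u hs hsu hua
    · push_neg at hua
      by_cases hsa : polyLength p j ≤ s
      · exact hseg s u hsa hsu hu
      · push_neg at hsa
        have h1 := ih hjm' s (polyLength p j) hs hsa.le le_rfl
        have h2 := hseg (polyLength p j) u le_rfl hua.le hu
        have htri : ‖P u - P s‖ ≤ ‖P u - P (polyLength p j)‖ + ‖P (polyLength p j) - P s‖ :=
          norm_sub_le_norm_sub_add_norm_sub _ _ _
        linarith

lemma respaces_edge {m : ℕ} (hm : 1 ≤ m) {a b : ℕ → EuclideanSpace ℝ (Fin dim)}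
    (h : Respaces m a b) :
    ∀ k, 1 ≤ k → k ≤ m → ‖b k - b (k - 1)‖ ≤ polyLength a m / m := by
  intro k hk1 hkm
  have hk1m : k - 1 ≤ m := le_trans (Nat.sub_le k 1) hkm
  rcases h with ⟨hL, hq⟩ | ⟨hL, P, hP, hq⟩
  · rw [hq k hkm, hq (k - 1) hk1m, hL]
    have he : ‖a (k - 1 + 1) - a (k - 1)‖ = 0 := edge_eq_zero hL (by omega)
    rw [Nat.sub_add_cancel hk1] at he
    rw [he]
    simp
  · rw [hq k hkm, hq (k - 1) hk1m]
    set L := polyLength a m with hLdef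
    have hmR : (0 : ℝ) < m := by exact_mod_cast hm
    have hkR : (1 : ℝ) ≤ (k : ℝ) := by exact_mod_cast hk1
    have hkmR : (k : ℝ) ≤ (m : ℝ) := by exact_mod_cast hkm
    have hcast : ((k - 1 : ℕ) : ℝ) = (k : ℝ) - 1 := by
      rw [Nat.cast_sub hk1]; simp
    rw [hcast]
    have h1 : ‖P ((k : ℝ) * L / m) - P (((k : ℝ) - 1) * L / m)‖
        ≤ (k : ℝ) * L / m - ((k : ℝ) - 1) * L / m := by
      apply arcparam_lip hP m le_rfl
      · apply div_nonneg (mul_nonneg (by linarith) hL.le) hmR.le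
      · rw [div_le_div_iff₀ hmR hmR]
        nlinarith [mul_nonneg hL.le hmR.le]
      · rw [div_le_iff₀ hmR]
        nlinarith
    have h2 : (k : ℝ) * L / m - ((k : ℝ) - 1) * L / m = L / m := by
      field_simp; ring
    linarith

lemma respaces_length_le {m : ℕ} (hm : 1 ≤ m) {a b : ℕ → EuclideanSpace ℝ (Fin dim)}
    (h : Respaces m a b) : polyLength b m ≤ polyLength a m := by
  have hmR : (0 : ℝ) < m := by exact_mod_cast hm
  calc polyLength b m = ∑ i ∈ Finset.range m, ‖b (i + 1) - b i‖ := rfl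
    _ ≤ ∑ _i ∈ Finset.range m, polyLength a m / m := by
        apply Finset.sum_le_sum
        intro i hi
        have := respaces_edge hm h (i + 1) (Nat.succ_le_succ (Nat.zero_le _))
          (Finset.mem_range.1 hi)
        simpa using this
    _ = polyLength a m := by
        rw [Finset.sum_const, Finset.card_range, nsmul_eq_mul]
        field_simp

lemma respaces_dist {m : ℕ} (hm : 1 ≤ m) {a b : ℕ → EuclideanSpace ℝ (Fin dim)} {E : ℝ}
    (h : Respaces m a b) (hE : ∀ i < m, ‖a (i + 1) - a i‖ ≤ E / m) :
    ∀ k ≤ m, ‖b k - a k‖ ≤ E - polyLength a m := by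
  intro k hkm
  have hmR : (0 : ℝ) < m := by exact_mod_cast hm
  set L := polyLength a m with hLdef
  have hLE : L ≤ E := by
    calc L = ∑ i ∈ Finset.range m, ‖a (i + 1) - a i‖ := rfl
      _ ≤ ∑ _i ∈ Finset.range m, E / m :=
          Finset.sum_le_sum fun i hi => hE i (Finset.mem_range.1 hi)
      _ = E := by rw [Finset.sum_const, Finset.card_range, nsmul_eq_mul]; field_simp
  have hE0 : 0 ≤ E := le_trans (polyLength_nonneg a m) hLE
  have hkR : (k : ℝ) ≤ (m : ℝ) := by exact_mod_cast hkm
  have hk0 : (0 : ℝ) ≤ (k : ℝ) := Nat.cast_nonneg k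
  set d := polyLength a k with hd
  have hdL : d ≤ L := polyLength_mono a hkm
  have hd0 : 0 ≤ d := polyLength_nonneg a k
  have hdup : d ≤ (k : ℝ) * E / m := by
    calc d = ∑ i ∈ Finset.range k, ‖a (i + 1) - a i‖ := rfl
      _ ≤ ∑ _i ∈ Finset.range k, E / m :=
          Finset.sum_le_sum fun i hi => hE i (lt_of_lt_of_le (Finset.mem_range.1 hi) hkm)
      _ = (k : ℝ) * (E / m) := by rw [Finset.sum_const, Finset.card_range, nsmul_eq_mul]
      _ = (k : ℝ) * E / m := by ring
  have hddown : L - d ≤ ((m : ℝ) - k) * E / m := by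
    have hsplit : polyLength a m = polyLength a k +
        ∑ i ∈ Finset.Ico k m, ‖a (i + 1) - a i‖ := by
      simp only [polyLength, Finset.range_eq_Ico]
      exact (Finset.sum_Ico_consecutive _ (Nat.zero_le k) hkm).symm
    have hrest : ∑ i ∈ Finset.Ico k m, ‖a (i + 1) - a i‖ ≤ ((m : ℝ) - k) * E / m := by
      calc ∑ i ∈ Finset.Ico k m, ‖a (i + 1) - a i‖
          ≤ ∑ _i ∈ Finset.Ico k m, E / m :=
            Finset.sum_le_sum fun i hi => hE i (Finset.mem_Ico.1 hi).2
        _ = ((m - k : ℕ) : ℝ) * (E / m) := by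
            rw [Finset.sum_const, Nat.card_Ico, nsmul_eq_mul]
        _ = ((m : ℝ) - k) * E / m := by rw [Nat.cast_sub hkm]; ring
    rw [← hLdef] at hsplit
    rw [← hd] at hsplit
    linarith
  rcases h with ⟨hL0, hq⟩ | ⟨hL0, P, hP, hq⟩
  · rw [hq k hkm]
    simp only [sub_self, norm_zero]
    rw [← hLdef] at hL0
    linarith
  · rw [← hLdef] at hL0 hq
    rw [hq k hkm]
    have hak : P d = a k := by
      rw [hd]; exact arcparam_vertex hm hP k hkm
    rw [← hak]
    have hkLm0 : 0 ≤ (k : ℝ) * L / m := div_nonneg (mul_nonneg hk0 hL0.le) hmR.le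
    have hkLmL : (k : ℝ) * L / m ≤ L := by rw [div_le_iff₀ hmR]; nlinarith
    rcases le_total d ((k : ℝ) * L / m) with hc | hc
    · have := arcparam_lip hP m le_rfl d ((k : ℝ) * L / m) hd0 hc hkLmL
      have hnum : (k : ℝ) * L / m - d ≤ E - L := by
        have h1 : (k : ℝ) * L / m - d ≤ (k : ℝ) * L / m - L + ((m : ℝ) - k) * E / m := by
          linarith
        have h2 : ((k : ℝ) * L / m - L + ((m : ℝ) - k) * E / m) - (E - L)
            = (k : ℝ) * (L - E) / m := by field_simp; ring
        have h3 : (k : ℝ) * (L - E) ≤ 0 := mul_nonpos_of_nonneg_of_nonpos hk0 (by linarith)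
        have h4 : (k : ℝ) * (L - E) / m ≤ 0 := div_nonpos_of_nonpos_of_nonneg h3 hmR.le
        linarith
      linarith
    · have hlip := arcparam_lip hP m le_rfl ((k : ℝ) * L / m) d hkLm0 hc hdL
      rw [norm_sub_rev] at hlip
      have hnum : d - (k : ℝ) * L / m ≤ E - L := by
        have h1 : d - (k : ℝ) * L / m ≤ (k : ℝ) * E / m - (k : ℝ) * L / m := by linarith
        have h2 : (k : ℝ) * E / m - (k : ℝ) * L / m = (k : ℝ) * (E - L) / m := by ring
        rw [h2] at h1
        have h3 : (k : ℝ) * (E - L) / m ≤ E - L := by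
          rw [div_le_iff₀ hmR]; nlinarith
        linarith
      linarith

/-- The iterated arclength respacings converge vertexwise, and the limiting
polygonal curve is equilateral. -/
theorem stmt9 {dim m : ℕ} (hm : 1 ≤ m) (p : ℕ → EuclideanSpace ℝ (Fin dim))
    (c : ℕ → ℕ → EuclideanSpace ℝ (Fin dim))
    (hc0 : ∀ k ≤ m, c 0 k = p k)
    (hstep : ∀ n, Respaces m (c n) (c (n + 1))) :
    ∃ q : ℕ → EuclideanSpace ℝ (Fin dim),
      (∀ k ≤ m, Tendsto (fun n => c n k) atTop (nhds (q k))) ∧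
      IsEquilateral q m := by
  have hmR : (0 : ℝ) < m := by exact_mod_cast hm
  set L : ℕ → ℝ := fun n => polyLength (c n) m with hLdef
  have hanti : ∀ n, L (n + 1) ≤ L n := fun n => respaces_length_le hm (hstep n)
  have hLnn : ∀ n, 0 ≤ L n := fun n => polyLength_nonneg _ _
  have hedge : ∀ n, ∀ i < m, ‖c (n + 1) (i + 1) - c (n + 1) i‖ ≤ L n / m := by
    intro n i hi
    have := respaces_edge hm (hstep n) (i + 1) (Nat.succ_le_succ (Nat.zero_le _)) hi
    simpa using this
  have hdist : ∀ n, ∀ k ≤ m, ‖c (n + 2) k - c (n + 1) k‖ ≤ L n - L (n + 1) :=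
    fun n => respaces_dist hm (hstep (n + 1)) (hedge n)
  have hmono : Antitone L := antitone_nat_of_succ_le hanti
  have hbdd : BddBelow (Set.range L) := ⟨0, fun x ⟨n, hn⟩ => hn ▸ hLnn n⟩
  have hLtend : Tendsto L atTop (nhds (⨅ n, L n)) := tendsto_atTop_ciInf hmono hbdd
  set ℓ := ⨅ n, L n with hldef
  have hsum : Summable (fun n => L n - L (n + 1)) := by
    apply summable_of_sum_range_le (c := L 0) (fun n => by linarith [hanti n])
    intro n
    rw [Finset.sum_range_sub' L n]
    linarith [hLnn n]
  have hconv : ∀ k, k ≤ m → ∃ x, Tendsto (fun n => c n k) atTop (nhds x) := by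
    intro k hk
    have hcauchy : CauchySeq (fun n => c (n + 1) k) := by
      apply cauchySeq_of_summable_dist
      apply Summable.of_nonneg_of_le (fun n => dist_nonneg) _ hsum
      intro n
      rw [dist_eq_norm, norm_sub_rev]
      exact hdist n k hk
    obtain ⟨x, hx⟩ := cauchySeq_tendsto_of_complete hcauchy
    exact ⟨x, (tendsto_add_atTop_iff_nat 1).1 hx⟩
  choose! q hq using hconv
  refine ⟨q, hq, ?_⟩
  have hedge_lim : ∀ k, 1 ≤ k → k ≤ m → ‖q k - q (k - 1)‖ = ℓ / m := by
    intro k hk1 hkm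
    have ht : Tendsto (fun n => ‖c (n + 1) k - c (n + 1) (k - 1)‖) atTop
        (nhds ‖q k - q (k - 1)‖) :=
      (((tendsto_add_atTop_iff_nat 1).2 (hq k hkm)).sub
        ((tendsto_add_atTop_iff_nat 1).2 (hq (k - 1) (by omega)))).norm
    have hub : Tendsto (fun n => L n / (m : ℝ)) atTop (nhds (ℓ / m)) := hLtend.div_const _
    have hup : ∀ n, ‖c (n + 1) k - c (n + 1) (k - 1)‖ ≤ L n / m := by
      intro n
      have := hedge n (k - 1) (by omega)
      rwa [Nat.sub_add_cancel hk1] at this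
    have h1 : ‖q k - q (k - 1)‖ ≤ ℓ / m := le_of_tendsto_of_tendsto' ht hub hup
    have hlow : ∀ n, L (n + 1) - ((m : ℝ) - 1) * (L n / m)
        ≤ ‖c (n + 1) k - c (n + 1) (k - 1)‖ := by
      intro n
      have hmem : k - 1 ∈ Finset.range m := Finset.mem_range.2 (by omega)
      have hsplit : L (n + 1) = ‖c (n + 1) (k - 1 + 1) - c (n + 1) (k - 1)‖ +
          ∑ i ∈ (Finset.range m).erase (k - 1), ‖c (n + 1) (i + 1) - c (n + 1) i‖ :=
        (Finset.add_sum_erase _ _ hmem).symm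
      rw [Nat.sub_add_cancel hk1] at hsplit
      have hrest : ∑ i ∈ (Finset.range m).erase (k - 1), ‖c (n + 1) (i + 1) - c (n + 1) i‖
          ≤ ((m : ℝ) - 1) * (L n / m) := by
        calc ∑ i ∈ (Finset.range m).erase (k - 1), ‖c (n + 1) (i + 1) - c (n + 1) i‖
            ≤ ∑ _i ∈ (Finset.range m).erase (k - 1), L n / m :=
              Finset.sum_le_sum fun i hi =>
                hedge n i (Finset.mem_range.1 (Finset.mem_of_mem_erase hi))
          _ = (((Finset.range m).erase (k - 1)).card : ℝ) * (L n / m) := by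
              rw [Finset.sum_const, nsmul_eq_mul]
          _ = ((m : ℝ) - 1) * (L n / m) := by
              rw [Finset.card_erase_of_mem hmem, Finset.card_range]
              congr 1
              rw [Nat.cast_sub hm]
              simp
      linarith
    have hlb_t : Tendsto (fun n => L (n + 1) - ((m : ℝ) - 1) * (L n / m)) atTop
        (nhds (ℓ - ((m : ℝ) - 1) * (ℓ / m))) :=
      ((tendsto_add_atTop_iff_nat 1).2 hLtend).sub ((hLtend.div_const _).const_mul _)
    have h2 : ℓ - ((m : ℝ) - 1) * (ℓ / m) ≤ ‖q k - q (k - 1)‖ :=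
      le_of_tendsto_of_tendsto' hlb_t ht hlow
    have h3 : ℓ - ((m : ℝ) - 1) * (ℓ / m) = ℓ / m := by field_simp; ring
    linarith
  intro k l hk1 hkm hl1 hlm
  rw [hedge_lim k hk1 hkm, hedge_lim l hl1 hlm]
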